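/- arXiv:1810.13077 — 4 statements merged into one kernel-verified Lean document; each statement's English description precedes it below -/
import Mathlib

section
/- Let G be an r-graph on vertex set [n] and let x = (x_1,…,x_n) be a feasible weight vector on G. Let i, j ∈ [n] with i ≠ j satisfy L_G(i∖j) = L_G(j∖i) = ∅. Define y = (y_1,…,y_n) by y_ℓ = x_ℓ for ℓ ∈ [n]∖{i,j} and y_i = y_j = (x_i + x_j)/2. Then λ(G,y) ≥ λ(G,x). Furthermore, if the pair {i,j} is contained in some edge of G, x_k > 0 for every k ∈ [n], and λ(G,y) = λ(G,x), then x_i = x_j. -/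
open Finset

/-- An `r`-graph: a finite vertex set together with a finite set of edges,
each edge being a subset of the vertex set. (Uniformity is a separate predicate.) -/
structure HyperGraph where
  verts : Finset ℕ
  edges : Finset (Finset ℕ)
  edge_sub : ∀ e ∈ edges, e ⊆ verts

namespace HyperGraph

/-- `G` is `r`-uniform: every edge has `r` vertices. -/
def IsUniform (G : HyperGraph) (r : ℕ) : Prop := ∀ e ∈ G.edges, e.card = r

def IsSubgraph (H G : HyperGraph) : Prop := H.verts ⊆ G.verts ∧ H.edges ⊆ G.edges

def IsProperSubgraph (H G : HyperGraph) : Prop := H.IsSubgraph G ∧ H ≠ G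

/-- `G` contains a subgraph isomorphic to `F` (an injective copy of `F`). -/
def HasCopy (G F : HyperGraph) : Prop :=
  ∃ f : ℕ → ℕ, Set.InjOn f ↑F.verts ∧ (∀ v ∈ F.verts, f v ∈ G.verts) ∧
    ∀ e ∈ F.edges, e.image f ∈ G.edges

/-- `G` is `F`-free: it contains no subgraph isomorphic to `F`. -/
def Free (G F : HyperGraph) : Prop := ¬ G.HasCopy F

/-- A feasible weight vector: nonnegative weights summing to 1 over the vertex set. -/
def IsWeighting (G : HyperGraph) (w : ℕ → ℝ) : Prop :=
  (∀ i, 0 ≤ w i) ∧ ∑ i ∈ G.verts, w i = 1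

/-- The Lagrangian polynomial `λ(G, w) = Σ_{e ∈ E(G)} Π_{i ∈ e} w i`. -/
def lagrangianAt (G : HyperGraph) (w : ℕ → ℝ) : ℝ := ∑ e ∈ G.edges, ∏ i ∈ e, w i

/-- The Lagrangian `λ(G)`: the maximum of `λ(G, w)` over feasible weight vectors. -/
noncomputable def lagrangian (G : HyperGraph) : ℝ :=
  sSup {x : ℝ | ∃ w : ℕ → ℝ, G.IsWeighting w ∧ x = G.lagrangianAt w}

/-- `G` is dense: every proper subgraph has strictly smaller Lagrangian. -/
def IsDense (G : HyperGraph) : Prop :=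
  ∀ H : HyperGraph, H.IsProperSubgraph G → H.lagrangian < G.lagrangian

/-- The Lagrangian density `π_λ(F) = sup { r! · λ(G) : G an F-free r-graph }`. -/
noncomputable def lagrangianDensity (r : ℕ) (F : HyperGraph) : ℝ :=
  sSup {x : ℝ | ∃ G : HyperGraph, G.IsUniform r ∧ G.Free F ∧
    x = (r.factorial : ℝ) * G.lagrangian}

/-- The subgraph of `G` induced by `A`. -/
def induce (G : HyperGraph) (A : Finset ℕ) : HyperGraph where
  verts := A
  edges := G.edges.filter (fun e => e ⊆ A)
  edge_sub := fun _ he => (Finset.mem_filter.mp he).2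

/-- The link `N(a,b) = { c : {a,b,c} ∈ E(G) }`. -/
def link2 (G : HyperGraph) (a b : ℕ) : Set ℕ := {c | ({a, b, c} : Finset ℕ) ∈ G.edges}

/-- `{a, b}` is a good pair to `A`. -/
def IsGoodPair (G : HyperGraph) (A : Finset ℕ) (a b : ℕ) : Prop :=
  a ≠ b ∧ a ∈ G.verts ∧ b ∈ G.verts ∧ a ∉ A ∧ b ∉ A ∧
    ∀ k ∈ A, G.link2 a k = {b} ∧ G.link2 b k = {a}

/-- The pairs `{a 1, b 1}, …, {a s, b s}` are good pairs to `A`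
partitioning `V(G) ∖ A`. -/
def GoodPartition (G : HyperGraph) (A : Finset ℕ) (s : ℕ) (a b : ℕ → ℕ) : Prop :=
  A ⊆ G.verts ∧
  (∀ v, v ∈ G.verts \ A ↔ ∃ i ∈ Finset.Icc 1 s, v = a i ∨ v = b i) ∧
  (∀ i ∈ Finset.Icc 1 s, ∀ j ∈ Finset.Icc 1 s, i ≠ j →
    ({a i, b i} : Finset ℕ) ∩ {a j, b j} = ∅) ∧
  (∀ i ∈ Finset.Icc 1 s, G.IsGoodPair A (a i) (b i))

/-- `G` is a good graph to `A`. -/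
def IsGoodGraph (G : HyperGraph) (A : Finset ℕ) : Prop := ∃ s a b, G.GoodPartition A s a b

end HyperGraph

open HyperGraph

/-- The complete `r`-graph `K_t^r` on `t` vertices. -/
def completeHyperGraph (t r : ℕ) : HyperGraph where
  verts := Finset.Icc 1 t
  edges := (Finset.Icc 1 t).powersetCard r
  edge_sub := fun _ he => (Finset.mem_powersetCard.mp he).1

/-- `K_t^{3-}`: the complete 3-graph on `t` vertices with one edge removed. -/
def completeMinus (t : ℕ) : HyperGraph where
  verts := Finset.Icc 1 t
  edges := ((Finset.Icc 1 t).powersetCard 3).filter (fun e => e ≠ ({1,2,3} : Finset ℕ))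
  edge_sub := fun _ he => (Finset.mem_powersetCard.mp (Finset.mem_filter.mp he).1).1

/-- The generalized triangle `F_5 = {123, 124, 345}`. -/
def F5 : HyperGraph where
  verts := {1,2,3,4,5}
  edges := {{1,2,3},{1,2,4},{3,4,5}}
  edge_sub := by decide

/-- The 3-uniform linear cycle of length 3: `C_3^3 = {123, 345, 561}`. -/
def C33 : HyperGraph where
  verts := {1,2,3,4,5,6}
  edges := {{1,2,3},{3,4,5},{5,6,1}}
  edge_sub := by decide

open scoped Classical in
/-- The 3-uniform linear cycle `C_t^3` of length `t`, with vertex set `[2t]` and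
edges `{123, 345, …, (2t-3)(2t-2)(2t-1), (2t-1)(2t)1}`. -/
noncomputable def linearCycle (t : ℕ) : HyperGraph where
  verts := Finset.Icc 1 (2*t)
  edges := ((Finset.Icc 1 (2*t)).powersetCard 3).filter
    (fun e => (∃ k < t - 1, e = ({2*k+1, 2*k+2, 2*k+3} : Finset ℕ)) ∨
      e = ({2*t-1, 2*t, 1} : Finset ℕ))
  edge_sub := fun _ he => (Finset.mem_powersetCard.mp (Finset.mem_filter.mp he).1).1

/-- The 3-graph `S_{2,t}` with vertex set `[t+2]` and edges `{12k : 3 ≤ k ≤ t+2}`. -/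
def S2 (t : ℕ) : HyperGraph where
  verts := Finset.Icc 1 (t+2)
  edges := (Finset.Icc 3 (t+2)).image (fun k => ({1,2,k} : Finset ℕ))
  edge_sub := by
    intro e he
    simp only [Finset.mem_image] at he
    obtain ⟨k, hk, rfl⟩ := he
    simp only [Finset.mem_Icc] at hk
    intro x hx
    simp only [Finset.mem_insert, Finset.mem_singleton] at hx
    simp only [Finset.mem_Icc]
    rcases hx with rfl | rfl | rfl <;> omega

/-- `F` is (up to relabeling) the disjoint union `G ⊔ H`. -/
def IsDisjointUnion (F G H : HyperGraph) : Prop :=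
  ∃ f g : ℕ → ℕ, Set.InjOn f ↑G.verts ∧ Set.InjOn g ↑H.verts ∧
    Disjoint (G.verts.image f) (H.verts.image g) ∧
    F.verts = G.verts.image f ∪ H.verts.image g ∧
    F.edges = G.edges.image (fun e => e.image f) ∪ H.edges.image (fun e => e.image g)

/-- An `r`-graph `H` on `t` vertices is perfect if `π_λ(H) = r! · λ(K_{t-1}^r)`. -/
def IsPerfect (r : ℕ) (H : HyperGraph) : Prop :=
  lagrangianDensity r H =
    (r.factorial : ℝ) * (completeHyperGraph (H.verts.card - 1) r).lagrangian

/-- The Turán number `ex(n, F)` for `r`-graphs on `n` vertices. -/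
noncomputable def exNum (n r : ℕ) (F : HyperGraph) : ℕ :=
  sSup {m : ℕ | ∃ G : HyperGraph, G.IsUniform r ∧ G.verts.card = n ∧ G.Free F ∧
    m = G.edges.card}

/-- The defining property of an edge of `O_s`. -/
def OsPred (s : ℕ) (e : Finset ℕ) : Prop :=
  ∃ i ∈ Finset.Icc 1 s, ∃ j ∈ Finset.Icc 1 s, i ≠ j ∧
    (e = ({2*i-1, 2*i, 2*j-1} : Finset ℕ) ∨ e = ({2*i-1, 2*i, 2*j} : Finset ℕ))

instance (s : ℕ) : DecidablePred (OsPred s) := fun e => by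
  unfold OsPred; infer_instance

/-- The 3-graph `O_s` on vertices `a_i = 2i-1`, `b_i = 2i` (`1 ≤ i ≤ s`) with edges
`a_i b_i a_j` and `a_i b_i b_j` for `i ≠ j`. -/
def Os (s : ℕ) : HyperGraph where
  verts := Finset.Icc 1 (2*s)
  edges := ((Finset.Icc 1 (2*s)).powersetCard 3).filter (OsPred s)
  edge_sub := fun _ he => (Finset.mem_powersetCard.mp (Finset.mem_filter.mp he).1).1

/-- `s = ⌈r^{r-1} / (2 (r-1)!)⌉`. -/
def sVal (r : ℕ) : ℕ := ⌈(r : ℚ)^(r-1) / (2 * ((r-1).factorial : ℚ))⌉₊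

/-- The vertex `a_i`, realized as the natural number `r - 2 + i`. -/
def aVert (r i : ℕ) : ℕ := r - 2 + i

/-- The vertex `m_j`: a fresh vertex distinct from `1, …, r-2, a_1, a_2, a_3`. -/
def mVert (r j : ℕ) : ℕ := r + 1 + j

/-- The edge `e_j = {1, 2, …, r-2, a_1, a_{j+1}}`. -/
def eEdge (r j : ℕ) : Finset ℕ := Finset.Icc 1 (r-2) ∪ {aVert r 1, aVert r (j+1)}

/-- The edge `{a_2, a_3, 1, …, i, m_1, …, m_{r-i-2}}` (for `i = 0` this is
`{a_2, a_3, m_1, …, m_{r-2}}`). -/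
def thirdEdge (r i : ℕ) : Finset ℕ :=
  {aVert r 2, aVert r 3} ∪ Finset.Icc 1 i ∪ (Finset.Icc 1 (r - i - 2)).image (mVert r)

/-- The `r`-graph `F_i^r` with edges `e_1`, `e_2` and the third edge above. -/
def Fgraph (r i : ℕ) : HyperGraph where
  verts := eEdge r 1 ∪ eEdge r 2 ∪ thirdEdge r i
  edges := {eEdge r 1, eEdge r 2, thirdEdge r i}
  edge_sub := by
    intro e he
    simp only [Finset.mem_insert, Finset.mem_singleton] at he
    rcases he with rfl | rfl | rfl
    · exact Finset.subset_union_left.trans Finset.subset_union_left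
    · exact Finset.subset_union_right.trans Finset.subset_union_left
    · exact Finset.subset_union_right


/-- averaging the weights of two vertices `i, j` with
`L_G(i∖j) = L_G(j∖i) = ∅` does not decrease the Lagrangian polynomial; moreover, if
`{i,j}` is covered by an edge, all weights are positive and equality holds, then
`x i = x j`. -/
theorem symmetrization (n r : ℕ) (G : HyperGraph) (hG : G.IsUniform r)
    (hv : G.verts = Finset.Icc 1 n)
    (x : ℕ → ℝ) (hx : G.IsWeighting x)
    (i j : ℕ) (hi : i ∈ G.verts) (hj : j ∈ G.verts) (hij : i ≠ j)
    (hL1 : ∀ e : Finset ℕ, ¬(j ∉ e ∧ insert i e ∈ G.edges ∧ insert j e ∉ G.edges))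
    (hL2 : ∀ e : Finset ℕ, ¬(i ∉ e ∧ insert j e ∈ G.edges ∧ insert i e ∉ G.edges))
    (y : ℕ → ℝ) (hy : ∀ ℓ, ℓ ≠ i → ℓ ≠ j → y ℓ = x ℓ)
    (hyi : y i = (x i + x j) / 2) (hyj : y j = (x i + x j) / 2) :
    G.lagrangianAt x ≤ G.lagrangianAt y ∧
      ((∃ e ∈ G.edges, i ∈ e ∧ j ∈ e) → (∀ k ∈ G.verts, 0 < x k) →
        G.lagrangianAt y = G.lagrangianAt x → x i = x j) := by
  classical
  obtain ⟨hx0, _⟩ := hx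
  have hji : j ≠ i := hij.symm
  -- y agrees with x away from i, j
  have hyx : ∀ s : Finset ℕ, i ∉ s → j ∉ s → ∏ k ∈ s, y k = ∏ k ∈ s, x k := by
    intro s hi' hj'
    refine Finset.prod_congr rfl fun k hk => hy k ?_ ?_
    · rintro rfl; exact hi' hk
    · rintro rfl; exact hj' hk
  set A := G.edges.filter (fun e => i ∈ e ∧ j ∈ e) with hAdef
  set B := G.edges.filter (fun e => i ∈ e ∧ j ∉ e) with hBdef
  set C := G.edges.filter (fun e => j ∈ e ∧ i ∉ e) with hCdef
  set D := G.edges.filter (fun e => i ∉ e ∧ j ∉ e) with hDdef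
  have hsplit : ∀ w : ℕ → ℝ, ∑ e ∈ G.edges, ∏ k ∈ e, w k =
      (∑ e ∈ A, ∏ k ∈ e, w k) + (∑ e ∈ B, ∏ k ∈ e, w k) +
      (∑ e ∈ C, ∏ k ∈ e, w k) + (∑ e ∈ D, ∏ k ∈ e, w k) := by
    intro w
    rw [hAdef, hBdef, hCdef, hDdef]
    simp only [Finset.sum_filter]
    rw [← Finset.sum_add_distrib, ← Finset.sum_add_distrib, ← Finset.sum_add_distrib]
    refine Finset.sum_congr rfl fun e _ => ?_
    by_cases h1 : i ∈ e <;> by_cases h2 : j ∈ e <;> simp [h1, h2]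
  -- products over edges containing both i and j
  have hprodA : ∀ (w : ℕ → ℝ) (e : Finset ℕ), i ∈ e → j ∈ e →
      ∏ k ∈ e, w k = w i * w j * ∏ k ∈ (e.erase i).erase j, w k := by
    intro w e hie hje
    rw [← Finset.mul_prod_erase e w hie,
      ← Finset.mul_prod_erase (e.erase i) w (Finset.mem_erase.mpr ⟨hji, hje⟩), mul_assoc]
  -- the A-sums
  have hAsum : ∀ w : ℕ → ℝ, ∑ e ∈ A, ∏ k ∈ e, w k =
      ∑ e ∈ A, w i * w j * ∏ k ∈ (e.erase i).erase j, w k := by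
    intro w
    refine Finset.sum_congr rfl fun e he => ?_
    obtain ⟨_, hie, hje⟩ := Finset.mem_filter.mp he
    exact hprodA w e hie hje
  have hAy : ∀ e ∈ A, ∏ k ∈ (e.erase i).erase j, y k = ∏ k ∈ (e.erase i).erase j, x k := by
    intro e _
    exact hyx _ (fun h => (Finset.mem_erase.mp (Finset.mem_of_mem_erase h)).1 rfl)
      (fun h => (Finset.mem_erase.mp h).1 rfl)
  -- D-sums are equal
  have hD : ∑ e ∈ D, ∏ k ∈ e, y k = ∑ e ∈ D, ∏ k ∈ e, x k := by
    refine Finset.sum_congr rfl fun e he => ?_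
    obtain ⟨_, hie, hje⟩ := Finset.mem_filter.mp he
    exact hyx e hie hje
  -- bijection between B and C
  have hφmem : ∀ e ∈ B, insert j (e.erase i) ∈ C := by
    intro e he
    obtain ⟨heE, hie, hje⟩ := Finset.mem_filter.mp he
    have h1 : insert i (e.erase i) = e := Finset.insert_erase hie
    have h2 : j ∉ e.erase i := fun h => hje (Finset.mem_of_mem_erase h)
    have hmem : insert j (e.erase i) ∈ G.edges := by
      by_contra hcon
      have h1' : insert i (e.erase i) ∈ G.edges := by rw [h1]; exact heE
      exact hL1 (e.erase i) ⟨h2, h1', hcon⟩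
    refine Finset.mem_filter.mpr ⟨hmem, Finset.mem_insert_self _ _, ?_⟩
    intro h
    rcases Finset.mem_insert.mp h with h' | h'
    · exact hij h'
    · exact (Finset.mem_erase.mp h').1 rfl
  have hψmem : ∀ e ∈ C, insert i (e.erase j) ∈ B := by
    intro e he
    obtain ⟨heE, hje, hie⟩ := Finset.mem_filter.mp he
    have h1 : insert j (e.erase j) = e := Finset.insert_erase hje
    have h2 : i ∉ e.erase j := fun h => hie (Finset.mem_of_mem_erase h)
    have hmem : insert i (e.erase j) ∈ G.edges := by
      by_contra hcon
      have h1' : insert j (e.erase j) ∈ G.edges := by rw [h1]; exact heE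
      exact hL2 (e.erase j) ⟨h2, h1', hcon⟩
    refine Finset.mem_filter.mpr ⟨hmem, Finset.mem_insert_self _ _, ?_⟩
    intro h
    rcases Finset.mem_insert.mp h with h' | h'
    · exact hij h'.symm
    · exact (Finset.mem_erase.mp h').1 rfl
  have hψφ : ∀ e ∈ B, insert i ((insert j (e.erase i)).erase j) = e := by
    intro e he
    obtain ⟨_, hie, hje⟩ := Finset.mem_filter.mp he
    have h2 : j ∉ e.erase i := fun h => hje (Finset.mem_of_mem_erase h)
    rw [Finset.erase_insert h2, Finset.insert_erase hie]
  have hφψ : ∀ e ∈ C, insert j ((insert i (e.erase j)).erase i) = e := by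
    intro e he
    obtain ⟨_, hje, hie⟩ := Finset.mem_filter.mp he
    have h2 : i ∉ e.erase j := fun h => hie (Finset.mem_of_mem_erase h)
    rw [Finset.erase_insert h2, Finset.insert_erase hje]
  have hCsum : ∀ w : ℕ → ℝ, ∑ e ∈ C, ∏ k ∈ e, w k =
      ∑ e ∈ B, ∏ k ∈ insert j (e.erase i), w k := by
    intro w
    refine Finset.sum_nbij' (fun e => insert i (e.erase j)) (fun e => insert j (e.erase i))
      hψmem hφmem hφψ hψφ (fun e he => ?_)
    rw [hφψ e he]
  -- key products on B
  have hBC : (∑ e ∈ B, ∏ k ∈ e, y k) + (∑ e ∈ C, ∏ k ∈ e, y k) =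
      (∑ e ∈ B, ∏ k ∈ e, x k) + (∑ e ∈ C, ∏ k ∈ e, x k) := by
    rw [hCsum y, hCsum x, ← Finset.sum_add_distrib, ← Finset.sum_add_distrib]
    refine Finset.sum_congr rfl fun e he => ?_
    obtain ⟨_, hie, hje⟩ := Finset.mem_filter.mp he
    have h2 : j ∉ e.erase i := fun h => hje (Finset.mem_of_mem_erase h)
    have hP : ∏ k ∈ e.erase i, y k = ∏ k ∈ e.erase i, x k :=
      hyx _ (Finset.notMem_erase i e) h2
    rw [Finset.prod_insert h2, Finset.prod_insert h2,
      ← Finset.mul_prod_erase e y hie, ← Finset.mul_prod_erase e x hie, hP]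
    ring_nf
    rw [hyi, hyj]
    ring
  -- the key identity
  have key : G.lagrangianAt y - G.lagrangianAt x =
      ∑ e ∈ A, (y i * y j - x i * x j) * ∏ k ∈ (e.erase i).erase j, x k := by
    unfold HyperGraph.lagrangianAt
    rw [hsplit y, hsplit x, hD, hAsum y, hAsum x]
    have : ∑ e ∈ A, y i * y j * ∏ k ∈ (e.erase i).erase j, y k =
        ∑ e ∈ A, y i * y j * ∏ k ∈ (e.erase i).erase j, x k :=
      Finset.sum_congr rfl fun e he => by rw [hAy e he]
    rw [this]
    have hsub : (∑ e ∈ A, y i * y j * ∏ k ∈ (e.erase i).erase j, x k) -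
        (∑ e ∈ A, x i * x j * ∏ k ∈ (e.erase i).erase j, x k) =
        ∑ e ∈ A, (y i * y j - x i * x j) * ∏ k ∈ (e.erase i).erase j, x k := by
      rw [← Finset.sum_sub_distrib]
      exact Finset.sum_congr rfl fun e _ => by ring
    linarith [hBC, hsub]
  have hterm : ∀ e ∈ A, 0 ≤ (y i * y j - x i * x j) * ∏ k ∈ (e.erase i).erase j, x k := by
    intro e _
    have hQ : 0 ≤ ∏ k ∈ (e.erase i).erase j, x k :=
      Finset.prod_nonneg fun k _ => hx0 k
    have : 0 ≤ y i * y j - x i * x j := by rw [hyi, hyj]; nlinarith [sq_nonneg (x i - x j)]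
    exact mul_nonneg this hQ
  constructor
  · have : 0 ≤ ∑ e ∈ A, (y i * y j - x i * x j) * ∏ k ∈ (e.erase i).erase j, x k :=
      Finset.sum_nonneg hterm
    linarith [key]
  · rintro ⟨e0, he0, hie0, hje0⟩ hpos heq
    have hsum0 : ∑ e ∈ A, (y i * y j - x i * x j) * ∏ k ∈ (e.erase i).erase j, x k = 0 := by
      rw [← key, heq]; ring
    have he0A : e0 ∈ A := Finset.mem_filter.mpr ⟨he0, hie0, hje0⟩
    have h0 : (y i * y j - x i * x j) * ∏ k ∈ (e0.erase i).erase j, x k = 0 :=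
      (Finset.sum_eq_zero_iff_of_nonneg hterm).mp hsum0 e0 he0A
    have hQpos : 0 < ∏ k ∈ (e0.erase i).erase j, x k := by
      refine Finset.prod_pos fun k hk => hpos k ?_
      exact G.edge_sub e0 he0 (Finset.mem_of_mem_erase (Finset.mem_of_mem_erase hk))
    have : y i * y j - x i * x j = 0 := by
      rcases mul_eq_zero.mp h0 with h | h
      · exact h
      · exact absurd h hQpos.ne'
    rw [hyi, hyj] at this
    nlinarith [sq_nonneg (x i - x j)]
end

section
/- Let G be a dense 3-graph on vertex set [n] and let x = (x_1,…,x_n) be an optimum weight vector for G with x_i > 0 for every i ∈ [n]. If x_i ≥ 1/3 for some i, then λ(G) ≤ 2/27. -/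
open Finset

open HyperGraph

/-! At an optimum weight vector `x` of an `r`-graph, the partial derivatives `∂_j λ` are all at
most `∂_i λ` whenever `x_i > 0`: moving a weight `t` from `i` to `j` changes `λ` by
`t (∂_j λ - ∂_i λ) - O(t²)`. Euler's identity then gives `r λ(G) = ∑_j x_j ∂_j λ ≤ ∂_i λ`, and
`∂_i λ` is at most the elementary symmetric sum `e_{r-1}` of the remaining weights, which by
Maclaurin's inequality is at most `(1 - x_i)^{r-1} / (r-1)!`. Hence `r! λ(G) ≤ (1 - x_i)^{r-1}`;
for `r = 3` and `x_i ≥ 1/3` this is `λ(G) ≤ (2/3)² / 6 = 2/27`. -/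

open Function
open scoped Nat Topology

section Maclaurin

variable {ι R : Type*} [DecidableEq ι]

theorem Finset.sum_powersetCard_succ_insert_prod [CommSemiring R] {a : ι} {T : Finset ι}
    (ha : a ∉ T) (f : ι → R) (k : ℕ) :
    ∑ S ∈ (insert a T).powersetCard (k + 1), ∏ i ∈ S, f i =
      ∑ S ∈ T.powersetCard (k + 1), ∏ i ∈ S, f i + f a * ∑ S ∈ T.powersetCard k, ∏ i ∈ S, f i := by
  have notMem_of_mem {S} (hS : S ∈ T.powersetCard k) : a ∉ S :=
    fun haS => ha ((mem_powersetCard.1 hS).1 haS)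
  rw [powersetCard_succ_insert ha, sum_union, sum_image, mul_sum]
  · exact congrArg _ (sum_congr rfl fun S hS => prod_insert (notMem_of_mem hS))
  · intro S hS S' hS' h
    rw [← erase_insert (notMem_of_mem hS), ← erase_insert (notMem_of_mem hS')]
    exact congrArg (erase · a) h
  · refine disjoint_left.2 fun S hS hS' => ?_
    obtain ⟨S', -, rfl⟩ := mem_image.1 hS'
    exact ha ((mem_powersetCard.1 hS).1 (mem_insert_self a S'))

theorem Finset.factorial_mul_sum_powersetCard_prod_le [CommSemiring R] [LinearOrder R]
    [IsOrderedRing R] [ExistsAddOfLE R] (T : Finset ι) {f : ι → R} (hf : ∀ i ∈ T, 0 ≤ f i)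
    (k : ℕ) : (k ! : R) * ∑ S ∈ T.powersetCard k, ∏ i ∈ S, f i ≤ (∑ i ∈ T, f i) ^ k := by
  induction T using Finset.induction_on generalizing k with
  | empty =>
    cases k with
    | zero => simp
    | succ k => simp [powersetCard_eq_empty.2 (by simp : (∅ : Finset ι).card < k + 1)]
  | insert a T ha ih =>
    have hfT : ∀ i ∈ T, 0 ≤ f i := fun i hi => hf i (mem_insert_of_mem hi)
    have hfa : 0 ≤ f a := hf a (mem_insert_self a T)
    have hsum : 0 ≤ ∑ i ∈ T, f i := sum_nonneg hfT
    cases k with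
    | zero => simp
    | succ k =>
      rw [sum_powersetCard_succ_insert_prod ha, sum_insert ha, add_comm (f a)]
      calc ((k + 1) ! : R) * (∑ S ∈ T.powersetCard (k + 1), ∏ i ∈ S, f i +
              f a * ∑ S ∈ T.powersetCard k, ∏ i ∈ S, f i)
          = (k + 1) ! * ∑ S ∈ T.powersetCard (k + 1), ∏ i ∈ S, f i +
              (k + 1) * f a * (k ! * ∑ S ∈ T.powersetCard k, ∏ i ∈ S, f i) := by
            push_cast [Nat.factorial_succ]; ring
        _ ≤ (∑ i ∈ T, f i) ^ (k + 1) + (k + 1) * f a * (∑ i ∈ T, f i) ^ k := by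
            have hcoeff : 0 ≤ (k + 1 : R) * f a :=
              mul_nonneg (add_nonneg k.cast_nonneg zero_le_one) hfa
            gcongr <;> exact ih hfT _
        _ ≤ (∑ i ∈ T, f i + f a) ^ (k + 1) := by
            simpa [mul_comm, mul_left_comm, mul_assoc] using
              pow_add_mul_le_add_pow hsum (add_nonneg (mul_nonneg zero_le_two hsum) hfa) (k + 1)

end Maclaurin

def moveWeight (w : ℕ → ℝ) (i j : ℕ) (t : ℝ) : ℕ → ℝ := update (update w i (w i - t)) j (w j + t)

theorem prod_moveWeight {w : ℕ → ℝ} {i j : ℕ} (hij : i ≠ j) (t : ℝ) (e : Finset ℕ) :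
    ∏ k ∈ e, moveWeight w i j t k =
      ∏ k ∈ e, w k + t * (if j ∈ e then ∏ k ∈ e.erase j, w k else 0)
        - t * (if i ∈ e then ∏ k ∈ e.erase i, w k else 0)
        - t ^ 2 * (if i ∈ e ∧ j ∈ e then ∏ k ∈ (e.erase j).erase i, w k else 0) := by
  unfold moveWeight
  by_cases hi : i ∈ e <;> by_cases hj : j ∈ e
  · have hi' : i ∈ e.erase j := mem_erase.2 ⟨hij, hi⟩
    simp only [hi, hj, and_self, if_true]
    rw [prod_update_of_mem hj, sdiff_singleton_eq_erase, prod_update_of_mem hi',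
      sdiff_singleton_eq_erase, ← mul_prod_erase e w hj, ← mul_prod_erase _ w hi',
      ← mul_prod_erase _ w (mem_erase.2 ⟨hij.symm, hj⟩), erase_right_comm (a := i)]
    ring
  · rw [prod_update_of_notMem hj, prod_update_of_mem hi, sdiff_singleton_eq_erase,
      ← mul_prod_erase e w hi]
    simp only [hi, hj, and_false, if_true, if_false]
    ring
  · rw [prod_update_of_mem hj, sdiff_singleton_eq_erase,
      prod_update_of_notMem (fun h => hi (mem_of_mem_erase h)), ← mul_prod_erase e w hj]
    simp only [hi, hj, false_and, if_true, if_false]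
    ring
  · rw [prod_update_of_notMem hj, prod_update_of_notMem hi]
    simp only [hi, hj, false_and, if_false]
    ring

theorem sum_moveWeight {w : ℕ → ℝ} {s : Finset ℕ} {i j : ℕ} (hi : i ∈ s) (hj : j ∈ s)
    (hij : i ≠ j) (t : ℝ) : ∑ k ∈ s, moveWeight w i j t k = ∑ k ∈ s, w k := by
  have hi' : i ∈ s.erase j := mem_erase.2 ⟨hij, hi⟩
  rw [moveWeight, sum_update_of_mem hj, sdiff_singleton_eq_erase, sum_update_of_mem hi',
    sdiff_singleton_eq_erase, ← add_sum_erase s w hj, ← add_sum_erase _ w hi']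
  ring

namespace HyperGraph

/-- The partial derivative `∂λ(G, w)/∂w_j`. -/
def lagrangianDeriv (G : HyperGraph) (w : ℕ → ℝ) (j : ℕ) : ℝ :=
  ∑ e ∈ G.edges with j ∈ e, ∏ k ∈ e.erase j, w k

variable {G : HyperGraph} {w : ℕ → ℝ}

theorem IsWeighting.le_one (hw : G.IsWeighting w) {i : ℕ} (hi : i ∈ G.verts) : w i ≤ 1 :=
  hw.2 ▸ single_le_sum (fun k _ => hw.1 k) hi

theorem IsWeighting.moveWeight (hw : G.IsWeighting w) {i j : ℕ} (hi : i ∈ G.verts)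
    (hj : j ∈ G.verts) (hij : i ≠ j) {t : ℝ} (ht : 0 ≤ t) (hti : t ≤ w i) :
    G.IsWeighting (moveWeight w i j t) := by
  refine ⟨fun k => ?_, (sum_moveWeight hi hj hij t).trans hw.2⟩
  unfold _root_.moveWeight
  rcases eq_or_ne k j with rfl | hkj
  · simpa using add_nonneg (hw.1 k) ht
  rcases eq_or_ne k i with rfl | hki
  · simpa [hkj] using hti
  · simpa [hkj, hki] using hw.1 k

theorem lagrangianAt_le_lagrangian (hw : G.IsWeighting w) : G.lagrangianAt w ≤ G.lagrangian := by
  refine le_csSup ⟨G.edges.card, ?_⟩ ⟨w, hw, rfl⟩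
  rintro _ ⟨u, hu, rfl⟩
  calc G.lagrangianAt u ≤ ∑ _e ∈ G.edges, (1 : ℝ) :=
        sum_le_sum fun e he => prod_le_one (fun k _ => hu.1 k)
          fun k hk => hu.le_one (G.edge_sub e he hk)
    _ = G.edges.card := by simp

theorem sum_mul_lagrangianDeriv {r : ℕ} (hG : G.IsUniform r) (w : ℕ → ℝ) :
    ∑ j ∈ G.verts, w j * G.lagrangianDeriv w j = r * G.lagrangianAt w := by
  have hterm (j : ℕ) : w j * G.lagrangianDeriv w j = ∑ e ∈ G.edges with j ∈ e, ∏ k ∈ e, w k := by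
    rw [lagrangianDeriv, mul_sum]
    exact sum_congr rfl fun e he => mul_prod_erase e w (mem_filter.1 he).2
  simp_rw [hterm, sum_filter]
  rw [sum_comm, lagrangianAt, mul_sum]
  refine sum_congr rfl fun e he => ?_
  rw [← sum_filter, filter_mem_eq_inter, inter_eq_right.2 (G.edge_sub e he), sum_const, hG e he,
    nsmul_eq_mul]

theorem lagrangianAt_moveWeight {i j : ℕ} (hij : i ≠ j) (t : ℝ) :
    G.lagrangianAt (moveWeight w i j t) =
      G.lagrangianAt w + t * (G.lagrangianDeriv w j - G.lagrangianDeriv w i)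
        - t ^ 2 * ∑ e ∈ G.edges with i ∈ e ∧ j ∈ e, ∏ k ∈ (e.erase j).erase i, w k := by
  simp only [lagrangianAt, lagrangianDeriv, prod_moveWeight hij, sum_filter, mul_sum,
    ← sum_sub_distrib, ← sum_add_distrib]
  exact sum_congr rfl fun _ _ => by ring

theorem lagrangianDeriv_le_of_lagrangianAt_eq (hw : G.IsWeighting w)
    (hopt : G.lagrangianAt w = G.lagrangian) {i j : ℕ} (hi : i ∈ G.verts) (hwi : 0 < w i)
    (hj : j ∈ G.verts) : G.lagrangianDeriv w j ≤ G.lagrangianDeriv w i := by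
  rcases eq_or_ne i j with rfl | hij
  · rfl
  set c := ∑ e ∈ G.edges with i ∈ e ∧ j ∈ e, ∏ k ∈ (e.erase j).erase i, w k
  have hmove : ∀ t ∈ Set.Ioc 0 (w i),
      G.lagrangianDeriv w j - G.lagrangianDeriv w i ≤ t * c := by
    rintro t ⟨ht, hti⟩
    -- moving `t` from `i` to `j` gains `t (∂_j - ∂_i) - t² c`, which optimality makes `≤ 0`
    have hle := lagrangianAt_le_lagrangian (hw.moveWeight hi hj hij ht.le hti)
    rw [lagrangianAt_moveWeight hij, hopt] at hle
    refine le_of_mul_le_mul_left ?_ ht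
    linarith [show t * (t * c) = t ^ 2 * c by ring]
  have hlim : Filter.Tendsto (· * c) (𝓝[>] 0) (𝓝 0) :=
    ((continuous_mul_const c).tendsto' 0 0 (zero_mul c)).mono_left nhdsWithin_le_nhds
  exact sub_nonpos.1 <| ge_of_tendsto hlim <| Filter.eventually_of_mem (Ioc_mem_nhdsGT hwi) hmove

theorem mul_lagrangian_le_lagrangianDeriv {r : ℕ} (hG : G.IsUniform r) (hw : G.IsWeighting w)
    (hopt : G.lagrangianAt w = G.lagrangian) {i : ℕ} (hi : i ∈ G.verts) (hwi : 0 < w i) :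
    r * G.lagrangian ≤ G.lagrangianDeriv w i :=
  calc r * G.lagrangian = ∑ j ∈ G.verts, w j * G.lagrangianDeriv w j := by
        rw [sum_mul_lagrangianDeriv hG, hopt]
    _ ≤ ∑ j ∈ G.verts, w j * G.lagrangianDeriv w i := sum_le_sum fun j hj =>
        mul_le_mul_of_nonneg_left (lagrangianDeriv_le_of_lagrangianAt_eq hw hopt hi hwi hj)
          (hw.1 j)
    _ = G.lagrangianDeriv w i := by rw [← sum_mul, hw.2, one_mul]

theorem factorial_mul_lagrangianDeriv_le {k : ℕ} (hG : G.IsUniform (k + 1))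
    (hw : G.IsWeighting w) {i : ℕ} (hi : i ∈ G.verts) :
    k ! * G.lagrangianDeriv w i ≤ (1 - w i) ^ k := by
  have hlink : G.lagrangianDeriv w i ≤ ∑ S ∈ (G.verts.erase i).powersetCard k, ∏ j ∈ S, w j := by
    rw [lagrangianDeriv, ← sum_image (f := fun S => ∏ j ∈ S, w j) (g := (erase · i))]
    · refine sum_le_sum_of_subset_of_nonneg (fun S hS => ?_)
        fun S _ _ => prod_nonneg fun j _ => hw.1 j
      obtain ⟨e, he, rfl⟩ := mem_image.1 hS
      rw [mem_filter] at he
      refine mem_powersetCard.2 ⟨erase_subset_erase i (G.edge_sub e he.1), ?_⟩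
      rw [card_erase_of_mem he.2, hG e he.1, Nat.add_sub_cancel]
    · intro e he e' he' h
      rw [← insert_erase (mem_filter.1 he).2, ← insert_erase (mem_filter.1 he').2]
      exact congrArg (insert i) h
  calc k ! * G.lagrangianDeriv w i
      ≤ k ! * ∑ S ∈ (G.verts.erase i).powersetCard k, ∏ j ∈ S, w j := by gcongr
    _ ≤ (∑ j ∈ G.verts.erase i, w j) ^ k :=
        factorial_mul_sum_powersetCard_prod_le _ (fun j _ => hw.1 j) k
    _ = (1 - w i) ^ k := by rw [sum_erase_eq_sub hi, hw.2]

theorem factorial_mul_lagrangian_le {k : ℕ} (hG : G.IsUniform (k + 1)) (hw : G.IsWeighting w)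
    (hopt : G.lagrangianAt w = G.lagrangian) {i : ℕ} (hi : i ∈ G.verts) (hwi : 0 < w i) :
    (k + 1)! * G.lagrangian ≤ (1 - w i) ^ k :=
  calc ((k + 1)! : ℝ) * G.lagrangian = k ! * ((k + 1 : ℕ) * G.lagrangian) := by
        push_cast [Nat.factorial_succ]; ring
    _ ≤ k ! * G.lagrangianDeriv w i := by
        gcongr; exact mul_lagrangian_le_lagrangianDeriv hG hw hopt hi hwi
    _ ≤ (1 - w i) ^ k := factorial_mul_lagrangianDeriv_le hG hw hi

end HyperGraph

theorem dense_large_weight_general (G : HyperGraph) (h3 : G.IsUniform 3)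
    (x : ℕ → ℝ) (hw : G.IsWeighting x) (hopt : G.lagrangianAt x = G.lagrangian)
    (hbig : ∃ i ∈ G.verts, (1 : ℝ) / 3 ≤ x i) :
    G.lagrangian ≤ 2 / 27 := by
  obtain ⟨i, hi, hxi⟩ := hbig
  have hbound := factorial_mul_lagrangian_le (k := 2) h3 hw hopt hi (by linarith)
  have hrest : (1 - x i) ^ 2 ≤ (2 / 3) ^ 2 :=
    pow_le_pow_left₀ (by linarith [hw.le_one hi]) (by linarith) 2
  norm_num [Nat.factorial] at hbound hrest
  linarith

/-- if a dense 3-graph on `[n]` has an optimum weight vector with all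
entries positive and some entry at least `1/3`, then `λ(G) ≤ 2/27`. -/
theorem dense_large_weight (n : ℕ) (G : HyperGraph) (h3 : G.IsUniform 3)
    (hv : G.verts = Finset.Icc 1 n) (hd : G.IsDense)
    (x : ℕ → ℝ) (hw : G.IsWeighting x) (hopt : G.lagrangianAt x = G.lagrangian)
    (hpos : ∀ i ∈ G.verts, 0 < x i) (hbig : ∃ i ∈ G.verts, (1 : ℝ) / 3 ≤ x i) :
    G.lagrangian ≤ 2 / 27 :=
  dense_large_weight_general G h3 x hw hopt hbig
end

section
/- For every s ≥ 2, λ(O_s) = 1/16. -/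
open Finset

open HyperGraph

/-! Write `t_i = x(a_i) + x(b_i)`. Every edge of `O_s` is a pair `{a_i, b_i}` together with one
vertex outside it, so `λ(O_s, x) ≤ ∑ x(a_i) x(b_i) (1 - t_i) ≤ ∑ t_i² (1 - t_i) / 4 ≤ ∑ t_i / 16
= 1/16`, the last step by `t (1 - t) ≤ 1/4`. Conversely `O_2` is the complete 3-graph on four
vertices, which `O_s` contains, and its uniform weighting attains `4 · 4⁻³ = 1/16`. -/

namespace HyperGraph

theorem lagrangian_eq_of_le_of_exists {G : HyperGraph} {c : ℝ}
    (hle : ∀ w, G.IsWeighting w → G.lagrangianAt w ≤ c)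
    (hex : ∃ w, G.IsWeighting w ∧ c ≤ G.lagrangianAt w) : G.lagrangian = c := by
  obtain ⟨w, hw, hcw⟩ := hex
  have hbdd : ∀ x ∈ {x : ℝ | ∃ w, G.IsWeighting w ∧ x = G.lagrangianAt w}, x ≤ c := by
    rintro x ⟨w, hw, rfl⟩
    exact hle w hw
  exact le_antisymm (csSup_le ⟨_, w, hw, rfl⟩ hbdd)
    (le_csSup_of_le ⟨c, hbdd⟩ ⟨w, hw, rfl⟩ hcw)

theorem lagrangianAt_le_of_edges_subset {G H : HyperGraph} {w : ℕ → ℝ}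
    (h : G.edges ⊆ H.edges) (hw : ∀ i, 0 ≤ w i) : G.lagrangianAt w ≤ H.lagrangianAt w :=
  sum_le_sum_of_subset_of_nonneg h fun _ _ _ => prod_nonneg fun i _ => hw i

end HyperGraph

theorem sum_Icc_two_mul {M : Type*} [AddCommMonoid M] (f : ℕ → M) (s : ℕ) :
    ∑ v ∈ Icc 1 (2 * s), f v = ∑ i ∈ Icc 1 s, (f (2 * i - 1) + f (2 * i)) := by
  induction s with
  | zero => simp
  | succ n ih =>
    rw [sum_Icc_succ_top (by omega), ← ih, show 2 * (n + 1) - 1 = 2 * n + 1 by omega,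
      show 2 * (n + 1) = 2 * n + 1 + 1 by ring, sum_Icc_succ_top (by omega),
      sum_Icc_succ_top (by omega), add_assoc]

theorem mul_mul_one_sub_add_le {K : Type*} [Field K] [LinearOrder K] [IsStrictOrderedRing K]
    {x y : K} (hx : 0 ≤ x) (hy : 0 ≤ y) (hxy : x + y ≤ 1) :
    x * y * (1 - (x + y)) ≤ (x + y) / 16 := by
  nlinarith [mul_nonneg (sub_nonneg.2 hxy) (sq_nonneg (x - y)),
    mul_nonneg (add_nonneg hx hy) (sq_nonneg (2 * (x + y) - 1))]

theorem Os_edges_mono {s t : ℕ} (h : s ≤ t) : (Os s).edges ⊆ (Os t).edges := by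
  intro _ he
  obtain ⟨he, i, hi, j, hj, hij, hcase⟩ := mem_filter.mp he
  have hst : Icc 1 s ⊆ Icc 1 t := Icc_subset_Icc le_rfl h
  exact mem_filter.mpr ⟨powersetCard_mono (Icc_subset_Icc le_rfl (by omega)) he,
    i, hst hi, j, hst hj, hij, hcase⟩

theorem Os_two_edges : (Os 2).edges = (Icc 1 4).powersetCard 3 := by decide

theorem Os_edges_subset_image (s : ℕ) :
    (Os s).edges ⊆ ((Icc 1 s).sigma fun i => Icc 1 (2 * s) \ {2 * i - 1, 2 * i}).image
      fun x => {2 * x.1 - 1, 2 * x.1, x.2} := by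
  intro e he
  obtain ⟨-, i, hi, j, hj, hij, hcase⟩ := mem_filter.mp he
  rw [mem_Icc] at hi hj
  rw [mem_image]
  rcases hcase with rfl | rfl
  · refine ⟨⟨i, 2 * j - 1⟩, ?_, rfl⟩
    simp only [mem_sigma, mem_sdiff, mem_Icc, mem_insert, mem_singleton]
    omega
  · refine ⟨⟨i, 2 * j⟩, ?_, rfl⟩
    simp only [mem_sigma, mem_sdiff, mem_Icc, mem_insert, mem_singleton]
    omega

theorem lagrangianAt_Os_le {s : ℕ} {w : ℕ → ℝ} (hw : (Os s).IsWeighting w) :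
    (Os s).lagrangianAt w ≤
      ∑ i ∈ Icc 1 s, w (2 * i - 1) * w (2 * i) * (1 - (w (2 * i - 1) + w (2 * i))) := by
  obtain ⟨hw0, hw1 : ∑ v ∈ Icc 1 (2 * s), w v = 1⟩ := hw
  calc (Os s).lagrangianAt w
      ≤ ∑ e ∈ ((Icc 1 s).sigma fun i => Icc 1 (2 * s) \ {2 * i - 1, 2 * i}).image
          (fun x => {2 * x.1 - 1, 2 * x.1, x.2}), ∏ v ∈ e, w v :=
        sum_le_sum_of_subset_of_nonneg (Os_edges_subset_image s)
          fun _ _ _ => prod_nonneg fun v _ => hw0 v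
    _ ≤ ∑ x ∈ (Icc 1 s).sigma fun i => Icc 1 (2 * s) \ {2 * i - 1, 2 * i},
          ∏ v ∈ ({2 * x.1 - 1, 2 * x.1, x.2} : Finset ℕ), w v :=
        sum_image_le_of_nonneg fun _ _ => prod_nonneg fun v _ => hw0 v
    _ = ∑ i ∈ Icc 1 s, ∑ v ∈ Icc 1 (2 * s) \ {2 * i - 1, 2 * i},
          w (2 * i - 1) * w (2 * i) * w v := by
        rw [sum_sigma]
        refine sum_congr rfl fun i hi => sum_congr rfl fun v hv => ?_
        dsimp only
        simp only [mem_Icc, mem_sdiff, mem_insert, mem_singleton] at hi hv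
        rw [prod_insert (by simp only [mem_insert, mem_singleton]; omega),
          prod_pair (by omega), mul_assoc]
    _ = _ := by
        refine sum_congr rfl fun i hi => ?_
        rw [mem_Icc] at hi
        have hpair : {2 * i - 1, 2 * i} ⊆ Icc 1 (2 * s) := by
          intro v hv
          simp only [mem_Icc, mem_insert, mem_singleton] at hv ⊢
          omega
        rw [← mul_sum, sum_sdiff_eq_sub hpair, hw1, sum_pair (by omega)]

theorem lagrangianAt_Os_le_one_div_sixteen {s : ℕ} {w : ℕ → ℝ} (hw : (Os s).IsWeighting w) :
    (Os s).lagrangianAt w ≤ 1 / 16 := by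
  have hsum : ∑ i ∈ Icc 1 s, (w (2 * i - 1) + w (2 * i)) = 1 := by
    rw [← sum_Icc_two_mul]
    exact hw.2
  calc (Os s).lagrangianAt w
      ≤ ∑ i ∈ Icc 1 s, w (2 * i - 1) * w (2 * i) * (1 - (w (2 * i - 1) + w (2 * i))) :=
        lagrangianAt_Os_le hw
    _ ≤ ∑ i ∈ Icc 1 s, (w (2 * i - 1) + w (2 * i)) / 16 := by
        refine sum_le_sum fun i hi => mul_mul_one_sub_add_le (hw.1 _) (hw.1 _) ?_
        rw [← hsum]
        exact single_le_sum (f := fun i => w (2 * i - 1) + w (2 * i))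
          (fun _ _ => add_nonneg (hw.1 _) (hw.1 _)) hi
    _ = 1 / 16 := by rw [← sum_div, hsum]

theorem exists_isWeighting_one_div_sixteen_le_lagrangianAt_Os {s : ℕ} (hs : 2 ≤ s) :
    ∃ w, (Os s).IsWeighting w ∧ 1 / 16 ≤ (Os s).lagrangianAt w := by
  set w : ℕ → ℝ := fun v => if v ∈ Icc 1 4 then 1 / 4 else 0
  have hw0 : ∀ v, 0 ≤ w v := fun v => by positivity
  have h4 : Icc 1 4 ⊆ Icc 1 (2 * s) := Icc_subset_Icc le_rfl (by omega)
  refine ⟨w, ⟨hw0, ?_⟩, ?_⟩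
  · change ∑ v ∈ Icc 1 (2 * s), w v = 1
    rw [sum_ite_mem, inter_eq_right.mpr h4, sum_const, Nat.card_Icc]
    norm_num
  · calc (1 / 16 : ℝ) = ∑ e ∈ (Icc 1 4).powersetCard 3, ∏ v ∈ e, w v := by
          have hcube : ∀ e ∈ (Icc 1 4).powersetCard 3, ∏ v ∈ e, w v = (1 / 4) ^ 3 := by
            intro e he
            rw [mem_powersetCard] at he
            rw [prod_congr rfl fun v hv => if_pos (he.1 hv), prod_const, he.2]
          rw [sum_congr rfl hcube, sum_const, card_powersetCard, Nat.card_Icc]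
          norm_num
      _ ≤ (Os s).lagrangianAt w := by
          rw [← Os_two_edges]
          exact lagrangianAt_le_of_edges_subset (Os_edges_mono hs) hw0

/-- for every `s ≥ 2`, `λ(O_s) = 1/16`. -/
theorem lagrangian_Os (s : ℕ) (hs : 2 ≤ s) : (Os s).lagrangian = 1 / 16 :=
  lagrangian_eq_of_le_of_exists (fun _ => lagrangianAt_Os_le_one_div_sixteen)
    (exists_isWeighting_one_div_sixteen_le_lagrangianAt_Os hs)
end

section
/- Let t ≥ 4 and let G be a dense, C_t^3-free 3-graph such that [2t−2] ⊆ V(G) and every 3-element subset of [2t−2] except {1,2,3} is an edge of G. Let a, b be distinct vertices in V(G)∖[2t−2] and let i, j, k, l be four distinct elements of [2t−2]. Then at most one of {a,i,j} and {b,k,l} is an edge of G. -/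
set_option maxHeartbeats 1000000


open Finset

open HyperGraph

/-- Auxiliary embedding function for the cycle construction. -/
def emb (i a j w k b l : ℕ) (σ : ℕ → ℕ) : ℕ → ℕ := fun p =>
  if p = 1 then i else if p = 2 then a else if p = 3 then j else if p = 4 then w
  else if p = 5 then k else if p = 6 then b else if p = 7 then l else σ (p - 8)

lemma emb_ge (i a j w k b l : ℕ) (σ : ℕ → ℕ) (p : ℕ) (hp : 8 ≤ p) :
    emb i a j w k b l σ p = σ (p - 8) := by
  unfold emb
  rw [if_neg (by omega), if_neg (by omega), if_neg (by omega), if_neg (by omega),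
    if_neg (by omega), if_neg (by omega), if_neg (by omega)]

lemma quad123 {x y z w : ℕ} (hx : x = 1 ∨ x = 2 ∨ x = 3) (hy : y = 1 ∨ y = 2 ∨ y = 3)
    (hz : z = 1 ∨ z = 2 ∨ z = 3) (hxy : x ≠ y) (hzx : z ≠ x) (hzy : z ≠ y)
    (hw1 : 1 ≤ w) (hwz : w < z) (hwx : w ≠ x) (hwy : w ≠ y) : False := by omega

lemma ge4_helper {s u : ℕ} (hm : s = 1 ∨ s = 2 ∨ s = 3) (hs : 2*u+3-8+1 ≤ s)
    (h4 : 4 ≤ u) : False := by omega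

lemma key_lemma (t : ℕ) (ht : 4 ≤ t) (G : HyperGraph)
    (hfree : G.Free (linearCycle t))
    (hsub : Finset.Icc 1 (2 * t - 2) ⊆ G.verts)
    (hK : ∀ e ⊆ Finset.Icc 1 (2 * t - 2), e.card = 3 →
      e ≠ ({1, 2, 3} : Finset ℕ) → e ∈ G.edges)
    (a b : ℕ) (ha : a ∈ G.verts) (hb : b ∈ G.verts) (hab : a ≠ b)
    (haA : a ∉ Finset.Icc 1 (2 * t - 2)) (hbA : b ∉ Finset.Icc 1 (2 * t - 2))
    (i j k l : ℕ)
    (hi : i ∈ Finset.Icc 1 (2 * t - 2)) (hj : j ∈ Finset.Icc 1 (2 * t - 2))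
    (hk : k ∈ Finset.Icc 1 (2 * t - 2)) (hl : l ∈ Finset.Icc 1 (2 * t - 2))
    (hij : i ≠ j) (hik : i ≠ k) (hil : i ≠ l) (hjk : j ≠ k) (hjl : j ≠ l)
    (hkl : k ≠ l) (hl123 : l ≠ 1 ∧ l ≠ 2 ∧ l ≠ 3)
    (e1 : ({a, i, j} : Finset ℕ) ∈ G.edges)
    (e2 : ({b, k, l} : Finset ℕ) ∈ G.edges) : False := by
  have hiA := Finset.mem_Icc.mp hi
  have hjA := Finset.mem_Icc.mp hj
  have hkA := Finset.mem_Icc.mp hk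
  have hlA := Finset.mem_Icc.mp hl
  have haA' : ¬ (1 ≤ a ∧ a ≤ 2 * t - 2) := by rwa [Finset.mem_Icc] at haA
  have hbA' : ¬ (1 ≤ b ∧ b ≤ 2 * t - 2) := by rwa [Finset.mem_Icc] at hbA
  have hQA : ({i, j, k, l} : Finset ℕ) ⊆ Finset.Icc 1 (2 * t - 2) := by
    intro x hx
    simp only [Finset.mem_insert, Finset.mem_singleton] at hx
    rcases hx with rfl | rfl | rfl | rfl <;> assumption
  have hQcard : ({i, j, k, l} : Finset ℕ).card = 4 := by
    rw [Finset.card_insert_of_notMem (by simp [hij, hik, hil]),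
      Finset.card_insert_of_notMem (by simp [hjk, hjl]),
      Finset.card_insert_of_notMem (by simp [hkl]), Finset.card_singleton]
  set S : Finset ℕ := Finset.Icc 1 (2 * t - 2) \ {i, j, k, l} with hSdef
  have hScard : S.card = 2 * t - 6 := by
    rw [hSdef, Finset.card_sdiff_of_subset hQA, hQcard, Nat.card_Icc]; omega
  obtain ⟨σ, hσmono0, hσS⟩ : ∃ σ : ℕ → ℕ, StrictMono σ ∧
      ∀ n, n < 2 * t - 6 → σ n ∈ S := by
    refine ⟨fun n => if h : n < 2 * t - 6 then S.orderEmbOfFin hScard ⟨n, h⟩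
      else 2 * t + n, ?_, ?_⟩
    · intro x y hxy
      by_cases hx : x < 2 * t - 6 <;> by_cases hy : y < 2 * t - 6
      · simp only [dif_pos hx, dif_pos hy]
        exact (S.orderEmbOfFin hScard).strictMono
          (show (⟨x, hx⟩ : Fin _) < ⟨y, hy⟩ from hxy)
      · have h1 : S.orderEmbOfFin hScard ⟨x, hx⟩ ∈ S := S.orderEmbOfFin_mem hScard _
        have h2 := Finset.mem_Icc.mp (Finset.mem_of_subset
          (by rw [hSdef]; exact Finset.sdiff_subset) h1)
        simp only [dif_pos hx, dif_neg hy]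
        omega
      · omega
      · simp only [dif_neg hx, dif_neg hy]
        omega
    · intro n hn
      simp only [dif_pos hn]
      exact S.orderEmbOfFin_mem hScard ⟨n, hn⟩
  have hS' : ∀ n, n < 2 * t - 6 →
      (1 ≤ σ n ∧ σ n ≤ 2 * t - 2) ∧ σ n ≠ i ∧ σ n ≠ j ∧ σ n ≠ k ∧ σ n ≠ l := by
    intro n hn
    have hx := hσS n hn
    rw [hSdef, Finset.mem_sdiff, Finset.mem_Icc] at hx
    simp only [Finset.mem_insert, Finset.mem_singleton, not_or] at hx
    exact ⟨hx.1, hx.2⟩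
  have hσmono : StrictMono σ := hσmono0
  have hσinj : Function.Injective σ := hσmono.injective
  have hσge : ∀ n, n + 1 ≤ σ n := by
    intro n
    induction n with
    | zero => have := (hS' 0 (by omega)).1.1; omega
    | succ n ih => have := hσmono (show n < n + 1 by omega); omega
  -- the embedding
  set f : ℕ → ℕ := emb i a j (σ (2 * t - 7)) k b l σ with hfdef
  have hf1 : f 1 = i := rfl
  have hf2 : f 2 = a := rfl
  have hf3 : f 3 = j := rfl
  have hf4 : f 4 = σ (2 * t - 7) := rfl
  have hf5 : f 5 = k := rfl
  have hf6 : f 6 = b := rfl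
  have hf7 : f 7 = l := rfl
  have hfge : ∀ p, 8 ≤ p → f p = σ (p - 8) := fun p hp => emb_ge i a j _ k b l σ p hp
  have hwf := hS' (2 * t - 7) (by omega)
  -- injectivity helper for mixed positions
  have hside : ∀ p q : ℕ, 1 ≤ p → p ≤ 7 → 8 ≤ q → q ≤ 2 * t → f p = f q → False := by
    intro p q hp1 hp7 hq8 hq2t hpq
    rw [hfge q hq8] at hpq
    have hqS := hS' (q - 8) (by omega)
    interval_cases p
    · rw [hf1] at hpq; omega
    · rw [hf2] at hpq; omega
    · rw [hf3] at hpq; omega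
    · rw [hf4] at hpq; have := hσinj hpq; omega
    · rw [hf5] at hpq; omega
    · rw [hf6] at hpq; omega
    · rw [hf7] at hpq; omega
  apply hfree
  refine ⟨f, ?_, ?_, ?_⟩
  · -- injectivity
    show Set.InjOn f ↑(Finset.Icc 1 (2 * t))
    intro p hp q hq hpq
    simp only [Finset.coe_Icc, Set.mem_Icc] at hp hq
    obtain ⟨hp1, hp2⟩ := hp
    obtain ⟨hq1, hq2⟩ := hq
    by_cases hp7 : p ≤ 7 <;> by_cases hq7 : q ≤ 7
    · have hwI : σ (2 * t - 7) ∈ Finset.Icc 1 (2 * t - 2) := Finset.mem_Icc.mpr hwf.1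
      have dia : i ≠ a := by intro h; rw [← h] at haA; exact haA hi
      have dij : i ≠ j := hij
      have diw : i ≠ σ (2 * t - 7) := (Ne.symm hwf.2.1)
      have dik : i ≠ k := hik
      have dib : i ≠ b := by intro h; rw [← h] at hbA; exact hbA hi
      have dil : i ≠ l := hil
      have daj : a ≠ j := by intro h; rw [h] at haA; exact haA hj
      have daw : a ≠ σ (2 * t - 7) := by intro h; rw [h] at haA; exact haA hwI
      have dak : a ≠ k := by intro h; rw [h] at haA; exact haA hk
      have dab : a ≠ b := hab
      have dal : a ≠ l := by intro h; rw [h] at haA; exact haA hl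
      have djw : j ≠ σ (2 * t - 7) := (Ne.symm hwf.2.2.1)
      have djk : j ≠ k := hjk
      have djb : j ≠ b := by intro h; rw [← h] at hbA; exact hbA hj
      have djl : j ≠ l := hjl
      have dwk : σ (2 * t - 7) ≠ k := hwf.2.2.2.1
      have dwb : σ (2 * t - 7) ≠ b := by intro h; rw [← h] at hbA; exact hbA hwI
      have dwl : σ (2 * t - 7) ≠ l := hwf.2.2.2.2
      have dkb : k ≠ b := by intro h; rw [← h] at hbA; exact hbA hk
      have dkl : k ≠ l := hkl
      have dbl : b ≠ l := by intro h; rw [h] at hbA; exact hbA hl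
      interval_cases p <;> interval_cases q
      · rfl
      · exact absurd hpq dia
      · exact absurd hpq dij
      · exact absurd hpq diw
      · exact absurd hpq dik
      · exact absurd hpq dib
      · exact absurd hpq dil
      · exact absurd hpq (Ne.symm dia)
      · rfl
      · exact absurd hpq daj
      · exact absurd hpq daw
      · exact absurd hpq dak
      · exact absurd hpq dab
      · exact absurd hpq dal
      · exact absurd hpq (Ne.symm dij)
      · exact absurd hpq (Ne.symm daj)
      · rfl
      · exact absurd hpq djw
      · exact absurd hpq djk
      · exact absurd hpq djb
      · exact absurd hpq djl
      · exact absurd hpq (Ne.symm diw)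
      · exact absurd hpq (Ne.symm daw)
      · exact absurd hpq (Ne.symm djw)
      · rfl
      · exact absurd hpq dwk
      · exact absurd hpq dwb
      · exact absurd hpq dwl
      · exact absurd hpq (Ne.symm dik)
      · exact absurd hpq (Ne.symm dak)
      · exact absurd hpq (Ne.symm djk)
      · exact absurd hpq (Ne.symm dwk)
      · rfl
      · exact absurd hpq dkb
      · exact absurd hpq dkl
      · exact absurd hpq (Ne.symm dib)
      · exact absurd hpq (Ne.symm dab)
      · exact absurd hpq (Ne.symm djb)
      · exact absurd hpq (Ne.symm dwb)
      · exact absurd hpq (Ne.symm dkb)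
      · rfl
      · exact absurd hpq dbl
      · exact absurd hpq (Ne.symm dil)
      · exact absurd hpq (Ne.symm dal)
      · exact absurd hpq (Ne.symm djl)
      · exact absurd hpq (Ne.symm dwl)
      · exact absurd hpq (Ne.symm dkl)
      · exact absurd hpq (Ne.symm dbl)
      · rfl
    · exact (hside p q hp1 hp7 (by omega) hq2 hpq).elim
    · exact (hside q p hq1 hq7 (by omega) hp2 hpq.symm).elim
    · rw [hfge p (by omega), hfge q (by omega)] at hpq
      have := hσinj hpq
      omega
  · -- maps into verts
    show ∀ v ∈ Finset.Icc 1 (2 * t), f v ∈ G.verts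
    intro v hv
    rw [Finset.mem_Icc] at hv
    obtain ⟨hv1, hv2⟩ := hv
    by_cases hv7 : v ≤ 7
    · interval_cases v
      · rw [hf1]; exact hsub hi
      · rw [hf2]; exact ha
      · rw [hf3]; exact hsub hj
      · rw [hf4]; exact hsub (Finset.mem_Icc.mpr hwf.1)
      · rw [hf5]; exact hsub hk
      · rw [hf6]; exact hb
      · rw [hf7]; exact hsub hl
    · rw [hfge v (by omega)]
      exact hsub (Finset.mem_Icc.mpr (hS' (v - 8) (by omega)).1)
  · -- edges
    intro e he
    have he' : (∃ u, u < t - 1 ∧ e = ({2*u+1, 2*u+2, 2*u+3} : Finset ℕ)) ∨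
        e = ({2*t-1, 2*t, 1} : Finset ℕ) := by
      have h := (Finset.mem_filter.mp he).2
      simpa using h
    clear he hside hσS hσmono0 hσinj hsub ha hb hij hik hjl hkl hab haA hbA haA' hbA'
      hiA hjA hkA hlA hQA hQcard hfree
    rcases he' with ⟨u, hu, rfl⟩ | rfl
    · rw [Finset.image_insert, Finset.image_insert, Finset.image_singleton]
      rcases show u = 0 ∨ u = 1 ∨ u = 2 ∨ u = 3 ∨ 4 ≤ u by clear * - hu; omega with
        rfl | rfl | rfl | rfl | hu4
      · simp only [show 2*0+1 = 1 by norm_num, show 2*0+2 = 2 by norm_num,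
          show 2*0+3 = 3 by norm_num, hf1, hf2, hf3]
        rw [Finset.insert_comm]
        exact e1
      · simp only [show 2*1+1 = 3 by norm_num, show 2*1+2 = 4 by norm_num,
          show 2*1+3 = 5 by norm_num, hf3, hf4, hf5]
        have hw2 := hS' (2 * t - 8) (show 2*t-8 < 2*t-6 by clear * - ht; omega)
        have hlt : σ (2 * t - 8) < σ (2 * t - 7) :=
          hσmono (show 2*t-8 < 2*t-7 by clear * - ht; omega)
        refine hK _ ?_ ?_ ?_
        · intro x hx
          simp only [Finset.mem_insert, Finset.mem_singleton] at hx
          rcases hx with rfl | rfl | rfl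
          · exact hj
          · exact Finset.mem_Icc.mpr hwf.1
          · exact hk
        · exact Finset.card_eq_three.mpr ⟨j, σ (2 * t - 7), k, hwf.2.2.1.symm, hjk,
            hwf.2.2.2.1, rfl⟩
        · intro hEq
          have h1 : j ∈ ({1,2,3} : Finset ℕ) := by rw [← hEq]; simp
          have h2 : σ (2 * t - 7) ∈ ({1,2,3} : Finset ℕ) := by rw [← hEq]; simp
          have h3 : k ∈ ({1,2,3} : Finset ℕ) := by rw [← hEq]; simp
          simp only [Finset.mem_insert, Finset.mem_singleton] at h1 h2 h3
          exact quad123 h1 h3 h2 hjk hwf.2.2.1 hwf.2.2.2.1 hw2.1.1 hlt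
            hw2.2.2.1 hw2.2.2.2.1
      · simp only [show 2*2+1 = 5 by norm_num, show 2*2+2 = 6 by norm_num,
          show 2*2+3 = 7 by norm_num, hf5, hf6, hf7]
        rw [Finset.insert_comm]
        exact e2
      · simp only [show 2*3+1 = 7 by norm_num, show 2*3+2 = 8 by norm_num,
          show 2*3+3 = 9 by norm_num, hf7, hfge 8 (by norm_num), hfge 9 (by norm_num),
          show (8:ℕ) - 8 = 0 by norm_num, show (9:ℕ) - 8 = 1 by norm_num]
        have h0 := hS' 0 (show 0 < 2*t-6 by clear * - ht; omega)
        have h1 := hS' 1 (show 1 < 2*t-6 by clear * - ht; omega)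
        have hlt : σ 0 < σ 1 := hσmono Nat.zero_lt_one
        refine hK _ ?_ ?_ ?_
        · intro x hx
          simp only [Finset.mem_insert, Finset.mem_singleton] at hx
          rcases hx with rfl | rfl | rfl
          · exact hl
          · exact Finset.mem_Icc.mpr h0.1
          · exact Finset.mem_Icc.mpr h1.1
        · exact Finset.card_eq_three.mpr ⟨l, σ 0, σ 1, h0.2.2.2.2.symm,
            h1.2.2.2.2.symm, hlt.ne, rfl⟩
        · intro hEq
          have hlmem : l ∈ ({1,2,3} : Finset ℕ) := by rw [← hEq]; simp
          simp only [Finset.mem_insert, Finset.mem_singleton] at hlmem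
          rcases hlmem with h | h | h
          exacts [hl123.1 h, hl123.2.1 h, hl123.2.2 h]
      · rw [hfge (2*u+1) (by clear * - hu4; omega), hfge (2*u+2) (by clear * - hu4; omega),
          hfge (2*u+3) (by clear * - hu4; omega)]
        have h1 := hS' (2*u+1-8) (show 2*u+1-8 < 2*t-6 by clear * - hu hu4 ht; omega)
        have h2 := hS' (2*u+2-8) (show 2*u+2-8 < 2*t-6 by clear * - hu hu4 ht; omega)
        have h3 := hS' (2*u+3-8) (show 2*u+3-8 < 2*t-6 by clear * - hu hu4 ht; omega)
        have hlt1 : σ (2*u+1-8) < σ (2*u+2-8) :=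
          hσmono (show 2*u+1-8 < 2*u+2-8 by clear * - hu4; omega)
        have hlt2 : σ (2*u+2-8) < σ (2*u+3-8) :=
          hσmono (show 2*u+2-8 < 2*u+3-8 by clear * - hu4; omega)
        refine hK _ ?_ ?_ ?_
        · intro x hx
          simp only [Finset.mem_insert, Finset.mem_singleton] at hx
          rcases hx with rfl | rfl | rfl
          · exact Finset.mem_Icc.mpr h1.1
          · exact Finset.mem_Icc.mpr h2.1
          · exact Finset.mem_Icc.mpr h3.1
        · exact Finset.card_eq_three.mpr ⟨_, _, _, hlt1.ne, (hlt1.trans hlt2).ne,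
            hlt2.ne, rfl⟩
        · intro hEq
          have hm : σ (2*u+3-8) ∈ ({1,2,3} : Finset ℕ) := by rw [← hEq]; simp
          simp only [Finset.mem_insert, Finset.mem_singleton] at hm
          exact ge4_helper hm (hσge (2*u+3-8)) hu4
    · rw [Finset.image_insert, Finset.image_insert, Finset.image_singleton, hf1]
      by_cases ht5 : 5 ≤ t
      · rw [hfge (2*t-1) (by clear * - ht5; omega), hfge (2*t) (by clear * - ht5; omega)]
        have h1 := hS' (2*t-1-8) (show 2*t-1-8 < 2*t-6 by clear * - ht5; omega)
        have h2 := hS' (2*t-8) (show 2*t-8 < 2*t-6 by clear * - ht5; omega)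
        have hlt : σ (2*t-1-8) < σ (2*t-8) :=
          hσmono (show 2*t-1-8 < 2*t-8 by clear * - ht5; omega)
        have h0 := hS' 0 (show 0 < 2*t-6 by clear * - ht5; omega)
        have hlt0 : σ 0 < σ (2*t-1-8) := hσmono (show 0 < 2*t-1-8 by clear * - ht5; omega)
        have hlt0' : σ 0 < σ (2*t-8) := hσmono (show 0 < 2*t-8 by clear * - ht5; omega)
        refine hK _ ?_ ?_ ?_
        · intro x hx
          simp only [Finset.mem_insert, Finset.mem_singleton] at hx
          rcases hx with rfl | rfl | rfl
          · exact Finset.mem_Icc.mpr h1.1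
          · exact Finset.mem_Icc.mpr h2.1
          · exact hi
        · exact Finset.card_eq_three.mpr ⟨_, _, _, hlt.ne, h1.2.1, h2.2.1, rfl⟩
        · intro hEq
          have hm1 : σ (2*t-1-8) ∈ ({1,2,3} : Finset ℕ) := by rw [← hEq]; simp
          have hm2 : σ (2*t-8) ∈ ({1,2,3} : Finset ℕ) := by rw [← hEq]; simp
          have hm3 : i ∈ ({1,2,3} : Finset ℕ) := by rw [← hEq]; simp
          simp only [Finset.mem_insert, Finset.mem_singleton] at hm1 hm2 hm3
          exact quad123 hm3 hm2 hm1 (fun h => h2.2.1 h.symm) h1.2.1 hlt.ne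
            h0.1.1 hlt0 h0.2.1 hlt0'.ne
      · have ht4 : t = 4 := by clear * - ht ht5; omega
        subst ht4
        simp only [show 2*4-1 = 7 by norm_num, show (2*4 : ℕ) = 8 by norm_num, hf7,
          hfge 8 (by norm_num), show (8:ℕ) - 8 = 0 by norm_num]
        have h0 := hS' 0 (by norm_num)
        refine hK _ ?_ ?_ ?_
        · intro x hx
          simp only [Finset.mem_insert, Finset.mem_singleton] at hx
          rcases hx with rfl | rfl | rfl
          · exact hl
          · exact Finset.mem_Icc.mpr h0.1
          · exact hi
        · exact Finset.card_eq_three.mpr ⟨_, _, _, h0.2.2.2.2.symm, hil.symm,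
            h0.2.1, rfl⟩
        · intro hEq
          have hlmem : l ∈ ({1,2,3} : Finset ℕ) := by rw [← hEq]; simp
          simp only [Finset.mem_insert, Finset.mem_singleton] at hlmem
          rcases hlmem with h | h | h
          exacts [hl123.1 h, hl123.2.1 h, hl123.2.2 h]

/-- let `t ≥ 4` and let `G` be a dense `C_t^3`-free 3-graph such that
every 3-subset of `[2t-2]` except `{1,2,3}` is an edge.  For distinct vertices
`a, b ∉ [2t-2]` and distinct `i, j, k, l ∈ [2t-2]`, at most one of `{a,i,j}` and
`{b,k,l}` is an edge of `G`. -/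
theorem at_most_one_edge_disjoint (t : ℕ) (ht : 4 ≤ t) (G : HyperGraph)
    (h3 : G.IsUniform 3) (hd : G.IsDense) (hfree : G.Free (linearCycle t))
    (hsub : Finset.Icc 1 (2 * t - 2) ⊆ G.verts)
    (hK : ∀ e ⊆ Finset.Icc 1 (2 * t - 2), e.card = 3 →
      e ≠ ({1, 2, 3} : Finset ℕ) → e ∈ G.edges)
    (a b : ℕ) (ha : a ∈ G.verts) (hb : b ∈ G.verts) (hab : a ≠ b)
    (haA : a ∉ Finset.Icc 1 (2 * t - 2)) (hbA : b ∉ Finset.Icc 1 (2 * t - 2))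
    (i j k l : ℕ)
    (hi : i ∈ Finset.Icc 1 (2 * t - 2)) (hj : j ∈ Finset.Icc 1 (2 * t - 2))
    (hk : k ∈ Finset.Icc 1 (2 * t - 2)) (hl : l ∈ Finset.Icc 1 (2 * t - 2))
    (hij : i ≠ j) (hik : i ≠ k) (hil : i ≠ l) (hjk : j ≠ k) (hjl : j ≠ l)
    (hkl : k ≠ l) :
    ¬(({a, i, j} : Finset ℕ) ∈ G.edges ∧ ({b, k, l} : Finset ℕ) ∈ G.edges) := by
  rintro ⟨hA, hB⟩
  have hcase : (l ≠ 1 ∧ l ≠ 2 ∧ l ≠ 3) ∨ (k ≠ 1 ∧ k ≠ 2 ∧ k ≠ 3) ∨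
      (j ≠ 1 ∧ j ≠ 2 ∧ j ≠ 3) ∨ (i ≠ 1 ∧ i ≠ 2 ∧ i ≠ 3) := by omega
  rcases hcase with h | h | h | h
  · exact key_lemma t ht G hfree hsub hK a b ha hb hab haA hbA i j k l hi hj hk hl
      hij hik hil hjk hjl hkl h hA hB
  · exact key_lemma t ht G hfree hsub hK a b ha hb hab haA hbA i j l k hi hj hl hk
      hij hil hik hjl hjk (Ne.symm hkl) h hA (by rw [Finset.pair_comm l k]; exact hB)
  · exact key_lemma t ht G hfree hsub hK b a hb ha (Ne.symm hab) hbA haA k l i j hk hl hi hj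
      hkl (Ne.symm hik) (Ne.symm hjk) (Ne.symm hil) (Ne.symm hjl) hij h hB hA
  · exact key_lemma t ht G hfree hsub hK b a hb ha (Ne.symm hab) hbA haA k l j i hk hl hj hi
      hkl (Ne.symm hjk) (Ne.symm hik) (Ne.symm hjl) (Ne.symm hil) (Ne.symm hij) h hB
      (by rw [Finset.pair_comm j i]; exact hA)
end
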